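/- arXiv:2106.08248 — 2 statements merged into one kernel-verified Lean document; each statement's English description precedes it below -/
import Mathlib

section
/- Let Δ, 𝒴 : ℝ → ℝ be continuous with 𝒴 = Δ·θ for a constant θ ∈ ℝ. Given continuous u₁, u₂, u₃ : ℝ → ℝ, let z solve ż = u₂𝒴 + u₃z, z(0) = 0; let ξ : ℝ → ℝ² solve ξ̇ = A(t)ξ + b(t), ξ(0) = 0; and let Φ : ℝ → ℝ^{2×2} solve Φ̇ = A(t)Φ, Φ(0) = I₂, where A(t) = [[0, u₁(t)], [u₂(t)Δ(t), u₃(t)]] and b(t) = (-u₁(t)z(t), 0). Then z(t) - ξ₂(t) = Φ₂₁(t)·θ for all t ≥ 0. -/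
/-- New LRE generator: `z - ξ₂ = Φ₂₁ θ`. -/
theorem stmt4 (θ : ℝ) (Δ Y u1 u2 u3 z : ℝ → ℝ) (ξ : ℝ → Fin 2 → ℝ)
    (Φ A : ℝ → Matrix (Fin 2) (Fin 2) ℝ) (b : ℝ → Fin 2 → ℝ)
    (hΔ : Continuous Δ) (hY : ∀ t, Y t = Δ t * θ)
    (hu1 : Continuous u1) (hu2 : Continuous u2) (hu3 : Continuous u3)
    (hz : ∀ t, HasDerivAt z (u2 t * Y t + u3 t * z t) t) (hz0 : z 0 = 0)
    (hA : ∀ t, A t = !![0, u1 t; u2 t * Δ t, u3 t])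
    (hb : ∀ t, b t = ![-(u1 t) * z t, 0])
    (hξ : ∀ t i, HasDerivAt (fun τ => ξ τ i) ((A t).mulVec (ξ t) i + b t i) t)
    (hξ0 : ξ 0 = 0)
    (hΦ : ∀ t i j, HasDerivAt (fun τ => Φ τ i j) ((A t * Φ t) i j) t)
    (hΦ0 : Φ 0 = 1) :
    ∀ t ≥ (0:ℝ), z t - ξ t 1 = Φ t 1 0 * θ := by
  intro T hT
  set f : ℝ → ℝ := fun τ => z τ - ξ τ 1 - Φ τ 1 0 * θ with hfdef
  set g : ℝ → ℝ := fun τ => θ - ξ τ 0 - Φ τ 0 0 * θ with hgdef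
  set F : ℝ → ℝ × ℝ := fun τ => (f τ, g τ) with hFdef
  set F' : ℝ → ℝ × ℝ := fun τ =>
    (u2 τ * Δ τ * g τ + u3 τ * f τ, u1 τ * f τ) with hF'def
  have hf' : ∀ τ, HasDerivAt f (u2 τ * Δ τ * g τ + u3 τ * f τ) τ := by
    intro τ
    have h := ((hz τ).sub (hξ τ 1)).sub ((hΦ τ 1 0).mul_const θ)
    refine h.congr_deriv ?_
    simp [hA, hb, hY, Matrix.mulVec, dotProduct, Matrix.mul_apply,
      Fin.sum_univ_two, Matrix.cons_val_one, Matrix.cons_val_zero, Matrix.head_cons]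
    ring
  have hg' : ∀ τ, HasDerivAt g (u1 τ * f τ) τ := by
    intro τ
    have h := ((hasDerivAt_const τ θ).sub (hξ τ 0)).sub ((hΦ τ 0 0).mul_const θ)
    refine h.congr_deriv ?_
    simp [hA, hb, hY, Matrix.mulVec, dotProduct, Matrix.mul_apply,
      Fin.sum_univ_two, Matrix.cons_val_one, Matrix.cons_val_zero, Matrix.head_cons]
    ring
  have hF' : ∀ τ, HasDerivAt F (F' τ) τ := fun τ => (hf' τ).prodMk (hg' τ)
  obtain ⟨C, hC⟩ := (isCompact_Icc (a := (0:ℝ)) (b := T)).exists_bound_of_continuousOn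
    (f := fun τ => |u2 τ * Δ τ| + |u3 τ| + |u1 τ|)
    (Continuous.continuousOn (by continuity))
  have hkey := norm_le_gronwallBound_of_norm_deriv_right_le
    (f := F) (f' := F') (δ := 0) (K := C) (ε := 0) (a := 0) (b := T)
    (fun τ hτ => ((hF' τ).continuousAt).continuousWithinAt)
    (fun τ hτ => ((hF' τ).hasDerivWithinAt))
    (by
      simp [hFdef, hfdef, hgdef, hz0, hξ0, hΦ0, Prod.norm_def, Matrix.one_apply])
    (by
      intro τ hτ
      have hCτ := hC τ (Set.mem_Icc.2 ⟨hτ.1, hτ.2.le⟩)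
      rw [Real.norm_eq_abs] at hCτ
      have habs : |u2 τ * Δ τ| + |u3 τ| + |u1 τ| ≤ C := le_trans (le_abs_self _) hCτ
      have hM : (0:ℝ) ≤ max ‖f τ‖ ‖g τ‖ := le_max_of_le_left (norm_nonneg _)
      have h1 : ‖u2 τ * Δ τ * g τ + u3 τ * f τ‖ ≤ C * max ‖f τ‖ ‖g τ‖ := by
        calc ‖u2 τ * Δ τ * g τ + u3 τ * f τ‖
            ≤ ‖u2 τ * Δ τ * g τ‖ + ‖u3 τ * f τ‖ := norm_add_le _ _
          _ = |u2 τ * Δ τ| * ‖g τ‖ + |u3 τ| * ‖f τ‖ := by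
              simp [norm_mul, abs_mul, Real.norm_eq_abs]
          _ ≤ |u2 τ * Δ τ| * max ‖f τ‖ ‖g τ‖ + |u3 τ| * max ‖f τ‖ ‖g τ‖ := by
              gcongr
              · exact le_max_right _ _
              · exact le_max_left _ _
          _ ≤ C * max ‖f τ‖ ‖g τ‖ := by nlinarith [abs_nonneg (u1 τ)]
      have h2 : ‖u1 τ * f τ‖ ≤ C * max ‖f τ‖ ‖g τ‖ := by
        calc ‖u1 τ * f τ‖ = |u1 τ| * ‖f τ‖ := by simp [Real.norm_eq_abs, abs_mul]
          _ ≤ C * max ‖f τ‖ ‖g τ‖ := by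
              have hu : |u1 τ| ≤ C := by
                have := abs_nonneg (u2 τ * Δ τ); have := abs_nonneg (u3 τ); linarith
              have hfm : ‖f τ‖ ≤ max ‖f τ‖ ‖g τ‖ := le_max_left _ _
              exact mul_le_mul hu hfm (norm_nonneg _) (le_trans (abs_nonneg _) hu)
      rw [Prod.norm_def, Prod.norm_def]
      simp only [hF'def, add_zero]
      exact max_le h1 h2)
  have := hkey T (Set.mem_Icc.2 ⟨hT, le_refl T⟩)
  rw [gronwallBound_ε0, zero_mul] at this
  have hnorm : ‖F T‖ ≤ 0 := this
  rw [Prod.norm_def] at hnorm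
  have hfT : ‖f T‖ = 0 :=
    le_antisymm (le_trans (le_max_left _ _) hnorm) (norm_nonneg _)
  have : f T = 0 := norm_eq_zero.1 hfT
  simpa [hfdef, sub_eq_zero] using this
end

section
/- Passivity parameterization: let H : ℝⁿ → ℝ be C¹ with H(x) = φ(x)ᵀθ + b(x) for known C¹ functions φ : ℝⁿ → ℝ^q, b : ℝⁿ → ℝ and constant θ ∈ ℝ^q. If along a C¹ trajectory x(t), d/dt H(x(t)) = u(t)ᵀy(t) (passivity power balance), then for λ > 0 the filtered signals y_f(t) := ∫₀ᵗ e^{-λ(t-s)}u(s)ᵀy(s)ds - (pH-filter of b∘x)(t) and Ω(t) := (pH-filter of φ∘x)(t) satisfy y_f(t) = Ω(t)ᵀθ + e^{-λt}·c₀ where c₀ depends only on initial conditions; with zero filter initial conditions matched, y_f = Ωᵀθ. -/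
lemma filt_aux (lam : ℝ) (f f' : ℝ → ℝ) (hf : ∀ s, HasDerivAt f (f' s) s)
    (hf' : Continuous f') (t : ℝ) :
    (∫ s in (0:ℝ)..t, Real.exp (-lam * (t - s)) * f' s)
      = f t - Real.exp (-lam * t) * f 0
        - lam * ∫ s in (0:ℝ)..t, Real.exp (-lam * (t - s)) * f s := by
  have hfc : Continuous f := by
    have : Differentiable ℝ f := fun s => (hf s).differentiableAt
    exact this.continuous
  have hec : Continuous fun s => Real.exp (-lam * (t - s)) := by continuity
  have hg : ∀ s, HasDerivAt (fun s => Real.exp (-lam * (t - s)) * f s)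
      (lam * (Real.exp (-lam * (t - s)) * f s) + Real.exp (-lam * (t - s)) * f' s) s := by
    intro s
    have h1 : HasDerivAt (fun s => Real.exp (-lam * (t - s))) (lam * Real.exp (-lam * (t - s))) s := by
      have h0 : HasDerivAt (fun s : ℝ => -lam * (t - s)) lam s := by
        have := ((hasDerivAt_id s).const_sub t).const_mul (-lam)
        simpa using this
      simpa [mul_comm, Function.comp_def] using (Real.hasDerivAt_exp (-lam * (t - s))).comp s h0
    have : HasDerivAt (fun s => Real.exp (-lam * (t - s)) * f s)
        (lam * Real.exp (-lam * (t - s)) * f s + Real.exp (-lam * (t - s)) * f' s) s := h1.mul (hf s)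
    convert this using 1
    ring
  have hInt1 : IntervalIntegrable (fun s => lam * (Real.exp (-lam * (t - s)) * f s))
      MeasureTheory.volume 0 t := (continuous_const.mul (hec.mul hfc)).intervalIntegrable _ _
  have hInt2 : IntervalIntegrable (fun s => Real.exp (-lam * (t - s)) * f' s)
      MeasureTheory.volume 0 t := (hec.mul hf').intervalIntegrable _ _
  have hftc := intervalIntegral.integral_eq_sub_of_hasDerivAt
    (f := fun s => Real.exp (-lam * (t - s)) * f s)
    (fun s _ => hg s) (hInt1.add hInt2)
  rw [intervalIntegral.integral_add hInt1 hInt2, intervalIntegral.integral_const_mul] at hftc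
  simp only [sub_self, mul_zero, Real.exp_zero, one_mul, sub_zero] at hftc
  linarith [hftc]

/-- Passivity-based parameterization: the filtered power balance yields the exact
LRE `y_f = Ωᵀθ`. -/
theorem stmt19 (n q m : ℕ) (lam : ℝ) (hlam : 0 < lam)
    (H b : (Fin n → ℝ) → ℝ) (φ : (Fin n → ℝ) → Fin q → ℝ) (θ : Fin q → ℝ)
    (hH : ∀ x, H x = (∑ i, φ x i * θ i) + b x)
    (x : ℝ → Fin n → ℝ) (u y : ℝ → Fin m → ℝ)
    (hu : ∀ j, Continuous fun t => u t j) (hy : ∀ j, Continuous fun t => y t j)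
    (hbc : Continuous fun t => b (x t))
    (hφc : ∀ i, Continuous fun t => φ (x t) i)
    (hpow : ∀ t, HasDerivAt (fun τ => H (x τ)) (∑ j, u t j * y t j) t)
    (yf : ℝ → ℝ) (Ω : ℝ → Fin q → ℝ)
    (hyf : ∀ t, yf t = (∫ s in (0:ℝ)..t, Real.exp (-lam * (t - s)) * ∑ j, u s j * y s j)
          - (b (x t) - Real.exp (-lam * t) * b (x 0)
              - lam * ∫ s in (0:ℝ)..t, Real.exp (-lam * (t - s)) * b (x s)))
    (hΩ : ∀ t i, Ω t i = φ (x t) i - Real.exp (-lam * t) * φ (x 0) i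
          - lam * ∫ s in (0:ℝ)..t, Real.exp (-lam * (t - s)) * φ (x s) i) :
    ∀ t ≥ (0:ℝ), yf t = ∑ i, Ω t i * θ i := by
  intro t _
  have hpc : Continuous fun s => ∑ j, u s j * y s j :=
    continuous_finset_sum _ fun j _ => (hu j).mul (hy j)
  have hmain := filt_aux lam (fun τ => H (x τ)) (fun s => ∑ j, u s j * y s j) hpow hpc t
  have hec : Continuous fun s => Real.exp (-lam * (t - s)) := by continuity
  -- split the integral of H along the trajectory
  have hHsplit : (∫ s in (0:ℝ)..t, Real.exp (-lam * (t - s)) * H (x s))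
      = (∑ i, (∫ s in (0:ℝ)..t, Real.exp (-lam * (t - s)) * φ (x s) i) * θ i)
        + ∫ s in (0:ℝ)..t, Real.exp (-lam * (t - s)) * b (x s) := by
    have h1 : (fun s => Real.exp (-lam * (t - s)) * H (x s))
        = fun s => (∑ i, (Real.exp (-lam * (t - s)) * φ (x s) i) * θ i)
            + Real.exp (-lam * (t - s)) * b (x s) := by
      funext s
      rw [hH (x s)]
      rw [mul_add, Finset.mul_sum]
      ring_nf
    rw [h1, intervalIntegral.integral_add, intervalIntegral.integral_finset_sum]
    · congr 1
      refine Finset.sum_congr rfl fun i _ => ?_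
      rw [intervalIntegral.integral_mul_const]
    · exact fun i _ => ((hec.mul (hφc i)).mul continuous_const).intervalIntegrable _ _
    · exact (continuous_finset_sum _ fun i _ =>
        (hec.mul (hφc i)).mul continuous_const).intervalIntegrable _ _
    · exact (hec.mul hbc).intervalIntegrable _ _
  rw [hyf t, hmain, hHsplit, hH (x t), hH (x 0)]
  simp only [hΩ, sub_mul, Finset.sum_sub_distrib]
  rw [mul_add, mul_add, Finset.mul_sum, Finset.mul_sum]
  simp only [mul_assoc]
  ring
end
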